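/- Initial algebras of strictly indexed endofunctors: let (Ē, e) be a strictly indexed endofunctor on a strictly indexed category L : C^op → Cat, with corresponding split fibration endofunctor E on Σ_C L. If (μĒ, ind_{Ē}) is the initial Ē-algebra in C and the endofunctor ē := L(ind_{Ē})⁻¹ ∘ e_{μĒ} on the fibre L(μĒ) has an initial algebra (μē, ind_{ē}), then E has initial algebra μE = (μĒ, μē) with structure map (ind_{Ē}, L(ind_{Ē})(ind_{ē})). -/

import Mathlib

universe w₂ w₁ v u

open CategoryTheory CategoryTheory.Limits Opposite

namespace CHAD

variable {C : Type u} [Category.{v} C]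

/-- The total category (Grothendieck construction) `Σ_C L` of a strictly indexed category
`L : Cᵒᵖ ⥤ Cat`. -/
structure Total (L : Cᵒᵖ ⥤ Cat.{w₂, w₁}) where
  base : C
  fib : L.obj (op base)

namespace Total

variable {L : Cᵒᵖ ⥤ Cat.{w₂, w₁}}

/-- A morphism `(W, w) ⟶ (X, x)` in `Σ_C L` is a pair `(f : W ⟶ X, f̄ : w ⟶ L(f)(x))`. -/
structure Hom (X Y : Total L) where
  base : X.base ⟶ Y.base
  fib : X.fib ⟶ (L.map base.op).toFunctor.obj Y.fib

theorem Hom.ext' {X Y : Total L} (f g : Hom X Y) (w_base : f.base = g.base)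
    (w_fib : f.fib ≫ eqToHom (by rw [w_base]) = g.fib) : f = g := by
  cases f; cases g
  dsimp at w_base
  subst w_base
  simpa using w_fib

/-- Identity morphism. -/
def id (X : Total L) : Hom X X where
  base := 𝟙 X.base
  fib := eqToHom (by simp)

/-- Composition of morphisms. -/
def comp {X Y Z : Total L} (f : Hom X Y) (g : Hom Y Z) : Hom X Z where
  base := f.base ≫ g.base
  fib := f.fib ≫ (L.map f.base.op).toFunctor.map g.fib ≫ eqToHom (by rw [op_comp, Functor.map_comp]; rfl)

attribute [local simp] eqToHom_map

instance : Category (Total L) where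
  Hom X Y := Total.Hom X Y
  id X := Total.id X
  comp f g := Total.comp f g
  id_comp f := by
    refine Hom.ext' _ _ (by simp [comp, id]) ?_
    apply eq_of_heq
    simp only [comp, id, ← Category.assoc]
    refine (comp_eqToHom_heq _ _).trans ?_
    refine (comp_eqToHom_heq _ _).trans ?_
    refine (eqToHom_comp_heq _ _).trans ?_
    exact Functor.hcongr_hom (congrArg Cat.Hom.toFunctor (L.map_id _)) f.fib
  comp_id f := by
    refine Hom.ext' _ _ (by simp [comp, id]) ?_
    apply eq_of_heq
    simp only [comp, id, eqToHom_map, ← Category.assoc]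
    refine (comp_eqToHom_heq _ _).trans ?_
    refine (comp_eqToHom_heq _ _).trans ?_
    exact comp_eqToHom_heq _ _
  assoc f g h := by
    refine Hom.ext' _ _ (by simp [comp]) ?_
    apply eq_of_heq
    simp only [comp, Functor.map_comp, eqToHom_map, ← Category.assoc]
    refine (comp_eqToHom_heq _ _).trans ?_
    refine (comp_eqToHom_heq _ _).trans ?_
    refine HEq.trans ?_ (comp_eqToHom_heq _ _).symm
    refine HEq.trans ?_ (comp_eqToHom_heq _ _).symm
    have key : ∀ {c : C} {A B B' D D' : L.obj (op c)} (a : A ⟶ B) (p : B = B') (u : B' ⟶ D)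
        (v : B ⟶ D'), D = D' → HEq u v → HEq ((a ≫ eqToHom p) ≫ u) (a ≫ v) := by
      intro c A B B' D D' a p u v hD huv
      subst p hD
      simp [eq_of_heq huv]
    refine key _ _ _ _ ?_ ?_
    · rw [op_comp, L.map_comp]; rfl
    · exact Functor.hcongr_hom (congrArg Cat.Hom.toFunctor (L.map_comp g.base.op f.base.op)) h.fib

@[simp] theorem id_base (X : Total L) : (𝟙 X : X ⟶ X).base = 𝟙 X.base := rfl

@[simp] theorem id_fib (X : Total L) :
    (𝟙 X : X ⟶ X).fib = eqToHom (by simp) := rfl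

@[simp] theorem comp_base {X Y Z : Total L} (f : X ⟶ Y) (g : Y ⟶ Z) :
    (f ≫ g).base = f.base ≫ g.base := rfl

@[simp] theorem comp_fib {X Y Z : Total L} (f : X ⟶ Y) (g : Y ⟶ Z) :
    (f ≫ g).fib = f.fib ≫ (L.map f.base.op).toFunctor.map g.fib ≫
      eqToHom (show (L.map f.base.op).toFunctor.obj ((L.map g.base.op).toFunctor.obj Z.fib) =
          (L.map (f.base ≫ g.base).op).toFunctor.obj Z.fib by
        rw [op_comp, Functor.map_comp]; rfl) := rfl

variable (L)

/-- The projection functor `Σ_C L ⥤ C`. -/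
def proj : Total L ⥤ C where
  obj X := X.base
  map f := f.base
  map_id _ := rfl
  map_comp _ _ := rfl

end Total

end CHAD

namespace CHAD

open CategoryTheory CategoryTheory.Limits Opposite

variable {C : Type u} [Category.{v} C] (L : Cᵒᵖ ⥤ Cat.{w₂, w₁})
variable (Ebar : C ⥤ C) (e : L ⟶ Ebar.op ⋙ L)

/-- The split fibration endofunctor on `Σ_C L` corresponding to a strictly indexed
endofunctor `(Ē, e)` on `L`. -/
def totalLift : Total L ⥤ Total L where
  obj X := ⟨Ebar.obj X.base, (e.app (op X.base)).toFunctor.obj X.fib⟩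
  map {X Y} f := ⟨Ebar.map f.base,
    (e.app (op X.base)).toFunctor.map f.fib ≫
      eqToHom (Functor.congr_obj (congrArg Cat.Hom.toFunctor (e.naturality f.base.op)) Y.fib)⟩
  map_id X := by
    refine Total.Hom.ext' _ _ (by simp) ?_
    apply eq_of_heq
    refine (comp_eqToHom_heq _ _).trans ?_
    refine (comp_eqToHom_heq _ _).trans ?_
    simp only [Total.id_fib, eqToHom_map]
    have key : ∀ {c : C} {A B B' : L.obj (op c)} (p : A = B) (q : A = B'), B = B' →
        HEq (eqToHom p) (eqToHom q) := by
      intro c A B B' p q h; subst p h; rfl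
    exact key _ _ (by simp)
  map_comp {X Y Z} f g := by
    refine Total.Hom.ext' _ _ (by simp) ?_
    apply eq_of_heq
    simp only [Total.comp_fib, Functor.map_comp, eqToHom_map, ← Category.assoc]
    refine (comp_eqToHom_heq _ _).trans ?_
    refine (comp_eqToHom_heq _ _).trans ?_
    refine HEq.trans ?_ (comp_eqToHom_heq _ _).symm
    refine HEq.trans ?_ (comp_eqToHom_heq _ _).symm
    have key2 : ∀ {D₁ D₂ : Cat.{w₂, w₁}} (F : D₁ ⥤ D₂) {A B B' : D₁} (a : A ⟶ B) (p : B = B'),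
        HEq (F.map (a ≫ eqToHom p)) (F.map a) := by
      intro D₁ D₂ F A B B' a p; subst p; simp
    refine (key2 _ _ _).trans ?_
    rw [Functor.map_comp]
    have key : ∀ {c : C} {A B B' D D' : L.obj (op c)} (a : A ⟶ B) (p : B = B') (u : B' ⟶ D)
        (v : B ⟶ D'), D = D' → HEq u v → HEq ((a ≫ eqToHom p) ≫ u) (a ≫ v) := by
      intro c A B B' D D' a p u v hD huv
      subst p hD
      simp [eq_of_heq huv]
    refine (key _ _ _ _ ?_ ?_).symm
    · exact (Functor.congr_obj (congrArg Cat.Hom.toFunctor (e.naturality f.base.op))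
        ((L.map g.base.op).toFunctor.obj Z.fib)).symm
    · exact (Functor.hcongr_hom (congrArg Cat.Hom.toFunctor (e.naturality f.base.op)) g.fib).symm

end CHAD

/-!
Initial algebras of strictly indexed endofunctors: let `(Ē, e)` be a strictly indexed
endofunctor on a strictly indexed category `L : Cᵒᵖ ⥤ Cat`, with corresponding split
fibration endofunctor `E` on `Σ_C L`.  If `(μĒ, ind_Ē)` is the initial `Ē`-algebra in `C`
and the endofunctor `ē := L(ind_Ē)⁻¹ ∘ e_{μĒ}` on the fibre `L(μĒ)` has an initial algebra
`(μē, ind_ē)`, then `E` has initial algebra `μE = (μĒ, μē)` with structure map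
`(ind_Ē, L(ind_Ē)(ind_ē))`.
-/

namespace CHAD

open CategoryTheory CategoryTheory.Limits Opposite

variable {C : Type u} [Category.{v} C] (L : Cᵒᵖ ⥤ Cat.{w₂, w₁})
variable (Ebar : C ⥤ C) (e : L ⟶ Ebar.op ⋙ L)

/-- The endofunctor `ē := L(ind_Ē)⁻¹ ∘ e_{μĒ}` on the fibre `L(μĒ)`.  (By Lambek's lemma the
structure map of the initial algebra is invertible.) -/
noncomputable def fibreAlgEndo (μ1 : CategoryTheory.Endofunctor.Algebra Ebar)
    (h1 : IsInitial μ1) : (L.obj (op μ1.a)) ⥤ (L.obj (op μ1.a)) :=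
  letI : IsIso μ1.str := CategoryTheory.Endofunctor.Algebra.Initial.str_isIso h1
  (e.app (op μ1.a) ≫ inv (L.map μ1.str.op)).toFunctor

/-- The algebra `(μE, ind_E) = ((μĒ, μē), (ind_Ē, L(ind_Ē)(ind_ē)))` for the split fibration
endofunctor `E` on `Σ_C L`. -/
noncomputable def totalAlgebra (μ1 : CategoryTheory.Endofunctor.Algebra Ebar)
    (h1 : IsInitial μ1)
    (μ2 : CategoryTheory.Endofunctor.Algebra (fibreAlgEndo L Ebar e μ1 h1)) :
    CategoryTheory.Endofunctor.Algebra (totalLift L Ebar e) :=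
  letI : IsIso μ1.str := CategoryTheory.Endofunctor.Algebra.Initial.str_isIso h1
  ⟨⟨μ1.a, μ2.a⟩,
    ⟨μ1.str,
      eqToHom (Functor.congr_obj (congrArg Cat.Hom.toFunctor (IsIso.inv_hom_id (L.map μ1.str.op)))
          ((e.app (op μ1.a)).toFunctor.obj μ2.a)).symm ≫
        (L.map μ1.str.op).toFunctor.map μ2.str⟩⟩


/-
A morphism `(f, g) : μE ⟶ A` in `Σ_C L` is an `E`-algebra morphism exactly when `f` is an
`Ē`-algebra morphism `μĒ ⟶ A.base` and `g` is an `ē`-algebra morphism from `μē` to `L(f)(A.fib)`,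
equipped with the `ē`-algebra structure that `A` induces along `f`: the fibre component of the
`E`-algebra square is the image, under the isomorphism of fibres `L(ind_Ē)`, of the `ē`-algebra
square. Initiality of `μĒ` and then of `μē` gives existence and uniqueness of the morphism.
-/

theorem Cat.hom_obj_inv_obj {D D' : Cat} (F : D ⟶ D') [IsIso F] (X : D') :
    F.toFunctor.obj ((inv F).toFunctor.obj X) = X :=
  Functor.congr_obj (congrArg Cat.Hom.toFunctor (IsIso.inv_hom_id F)) X

theorem Cat.inv_obj_hom_obj {D D' : Cat} (F : D ⟶ D') [IsIso F] (X : D) :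
    (inv F).toFunctor.obj (F.toFunctor.obj X) = X :=
  Functor.congr_obj (congrArg Cat.Hom.toFunctor (IsIso.hom_inv_id F)) X

theorem Cat.hom_map_inv_map {D D' : Cat} (F : D ⟶ D') [IsIso F] {X Y : D'} (x : X ⟶ Y) :
    F.toFunctor.map ((inv F).toFunctor.map x) =
      eqToHom (Cat.hom_obj_inv_obj F X) ≫ x ≫ eqToHom (Cat.hom_obj_inv_obj F Y).symm := by
  simpa using Functor.congr_hom (congrArg Cat.Hom.toFunctor (IsIso.inv_hom_id F)) x

theorem Cat.inv_map_comp_eqToHom_eq_iff {D D' : Cat} (F : D ⟶ D') [IsIso F] {X : D'} {W : D}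
    (P : X ⟶ F.toFunctor.obj W) (Q : (inv F).toFunctor.obj X ⟶ W) :
    (inv F).toFunctor.map P ≫ eqToHom (Cat.inv_obj_hom_obj F W) = Q ↔
      P = eqToHom (Cat.hom_obj_inv_obj F X).symm ≫ F.toFunctor.map Q := by
  rw [← (Cat.equivOfIso (asIso F)).functor.map_injective.eq_iff]
  dsimp only [Cat.equivOfIso, asIso_hom]
  simp [Cat.hom_map_inv_map, eqToHom_map, eqToHom_comp_iff]

/-- The shape of the fibre component of the `E`-algebra square for `(f, g) : μE ⟶ A`, with
`F = L(ind_Ē)`, `a = e(g)`, `s = L(Ē f)(A.str.fib)`, `b = ind_ē`, `c = g`. All objects are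
variables here, so that the lemma applies by unification where the fibres are only
definitionally equal to the ones written. -/
theorem Cat.comp_eqToHom_eq_iff_inv_map_comp_eq {D D' : Cat} (F : D ⟶ D') [IsIso F]
    {X₀ X₁ X₂ Y Y' Y'' : D'} {V W : D} (a : X₀ ⟶ X₁) (s : X₂ ⟶ Y)
    (b : (inv F).toFunctor.obj X₀ ⟶ V) (c : V ⟶ W) (n : X₁ = X₂) (m : Y = Y') (q : Y' = Y'')
    (r : X₀ = F.toFunctor.obj ((inv F).toFunctor.obj X₀)) (t : F.toFunctor.obj W = Y'')
    (m' : Y = F.toFunctor.obj W) (k : (inv F).toFunctor.obj (F.toFunctor.obj W) = W) :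
    ((a ≫ eqToHom n) ≫ s ≫ eqToHom m) ≫ eqToHom q =
        (eqToHom r ≫ F.toFunctor.map b) ≫ F.toFunctor.map c ≫ eqToHom t ↔
      (inv F).toFunctor.map a ≫ (inv F).toFunctor.map (eqToHom n ≫ s ≫ eqToHom m') ≫
        eqToHom k = b ≫ c := by
  subst n m q t
  rw [← Functor.map_comp_assoc, Cat.inv_map_comp_eqToHom_eq_iff]
  simp

section

variable {L Ebar e}

theorem Total.hom_eq_iff {X Y : Total L} {φ ψ : X ⟶ Y} (h : φ.base = ψ.base) :
    φ = ψ ↔ φ.fib ≫ eqToHom (by rw [h]) = ψ.fib :=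
  ⟨by rintro rfl; simp, Total.Hom.ext' φ ψ h⟩

theorem map_op_obj_map_op_obj {X Y Z : C} (f : X ⟶ Y) (g : Y ⟶ Z) (x : L.obj (op Z)) :
    (L.map f.op).toFunctor.obj ((L.map g.op).toFunctor.obj x) =
      (L.map (f ≫ g).op).toFunctor.obj x := by
  rw [op_comp, L.map_comp]; rfl

def baseAlg (A : Endofunctor.Algebra (totalLift L Ebar e)) : Endofunctor.Algebra Ebar :=
  ⟨A.a.base, A.str.base⟩

def baseAlgHom {A B : Endofunctor.Algebra (totalLift L Ebar e)} (m : A ⟶ B) :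
    baseAlg A ⟶ baseAlg B :=
  ⟨m.f.base, congrArg Total.Hom.base m.h⟩

/-- `L(f)(A.fib)` with the structure map `L(ind_Ē)⁻¹(L(Ē f)(A.str.fib))`, made to typecheck by
the naturality of `e` and the algebra square of `f`. -/
noncomputable def fibreAlg (μ1 : Endofunctor.Algebra Ebar) (h1 : IsInitial μ1)
    (A : Endofunctor.Algebra (totalLift L Ebar e)) (f : μ1 ⟶ baseAlg A) :
    Endofunctor.Algebra (fibreAlgEndo L Ebar e μ1 h1) :=
  haveI : IsIso μ1.str := Endofunctor.Algebra.Initial.str_isIso h1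
  { a := (L.map f.f.op).toFunctor.obj A.a.fib
    str := (inv (L.map μ1.str.op)).toFunctor.map
        (eqToHom (Functor.congr_obj (congrArg Cat.Hom.toFunctor (e.naturality f.f.op)) A.a.fib) ≫
          (L.map (Ebar.map f.f).op).toFunctor.map A.str.fib ≫
          eqToHom ((map_op_obj_map_op_obj _ _ _).trans
            ((congrArg (fun k => (L.map k.op).toFunctor.obj A.a.fib) f.h).trans
              (map_op_obj_map_op_obj _ _ _).symm))) ≫
      eqToHom (Cat.inv_obj_hom_obj _ _) }

theorem totalAlgebra_hom_condition_iff (μ1 : Endofunctor.Algebra Ebar) (h1 : IsInitial μ1)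
    (μ2 : Endofunctor.Algebra (fibreAlgEndo L Ebar e μ1 h1))
    (A : Endofunctor.Algebra (totalLift L Ebar e)) (φ : (totalAlgebra L Ebar e μ1 h1 μ2).a ⟶ A.a)
    (hφ : Ebar.map φ.base ≫ A.str.base = μ1.str ≫ φ.base) :
    (totalLift L Ebar e).map φ ≫ A.str = (totalAlgebra L Ebar e μ1 h1 μ2).str ≫ φ ↔
      (fibreAlgEndo L Ebar e μ1 h1).map φ.fib ≫ (fibreAlg μ1 h1 A ⟨φ.base, hφ⟩).str =
        μ2.str ≫ φ.fib := by
  have : IsIso μ1.str := Endofunctor.Algebra.Initial.str_isIso h1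
  exact (Total.hom_eq_iff hφ).trans
    (Cat.comp_eqToHom_eq_iff_inv_map_comp_eq (L.map μ1.str.op) _ _ _ _ _ _ _ _ _ _ _)

noncomputable def fibreAlgHom (μ1 : Endofunctor.Algebra Ebar) (h1 : IsInitial μ1)
    (μ2 : Endofunctor.Algebra (fibreAlgEndo L Ebar e μ1 h1))
    {A : Endofunctor.Algebra (totalLift L Ebar e)} (m : totalAlgebra L Ebar e μ1 h1 μ2 ⟶ A) :
    μ2 ⟶ fibreAlg μ1 h1 A (baseAlgHom m) :=
  ⟨m.f.fib, (totalAlgebra_hom_condition_iff μ1 h1 μ2 A m.f (baseAlgHom m).h).1 m.h⟩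

noncomputable def totalAlgebraDesc (μ1 : Endofunctor.Algebra Ebar) (h1 : IsInitial μ1)
    (μ2 : Endofunctor.Algebra (fibreAlgEndo L Ebar e μ1 h1)) (h2 : IsInitial μ2)
    (A : Endofunctor.Algebra (totalLift L Ebar e)) : totalAlgebra L Ebar e μ1 h1 μ2 ⟶ A :=
  let f := h1.to (baseAlg A)
  let g := h2.to (fibreAlg μ1 h1 A f)
  ⟨⟨f.f, g.f⟩, (totalAlgebra_hom_condition_iff μ1 h1 μ2 A ⟨f.f, g.f⟩ f.h).2 g.h⟩

theorem totalAlgebra_hom_ext (μ1 : Endofunctor.Algebra Ebar) (h1 : IsInitial μ1)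
    (μ2 : Endofunctor.Algebra (fibreAlgEndo L Ebar e μ1 h1)) (h2 : IsInitial μ2)
    {A : Endofunctor.Algebra (totalLift L Ebar e)} (m m' : totalAlgebra L Ebar e μ1 h1 μ2 ⟶ A) :
    m = m' := by
  have hbase := h1.hom_ext (baseAlgHom m) (baseAlgHom m')
  rcases m with ⟨⟨b, g⟩, hm⟩
  rcases m' with ⟨⟨b', g'⟩, hm'⟩
  obtain rfl : b = b' := congrArg Endofunctor.Algebra.Hom.f hbase
  have hfib := h2.hom_ext (fibreAlgHom μ1 h1 μ2 ⟨⟨b, g⟩, hm⟩) (fibreAlgHom μ1 h1 μ2 ⟨⟨b, g'⟩, hm'⟩)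
  obtain rfl : g = g' := congrArg Endofunctor.Algebra.Hom.f hfib
  rfl

end

theorem initial_algebra_of_strictly_indexed_endofunctor
    (μ1 : CategoryTheory.Endofunctor.Algebra Ebar) (h1 : IsInitial μ1)
    (μ2 : CategoryTheory.Endofunctor.Algebra (fibreAlgEndo L Ebar e μ1 h1))
    (h2 : IsInitial μ2) :
    Nonempty (IsInitial (totalAlgebra L Ebar e μ1 h1 μ2)) :=
  ⟨IsInitial.ofUniqueHom (totalAlgebraDesc μ1 h1 μ2 h2)
    (fun _ m => totalAlgebra_hom_ext μ1 h1 μ2 h2 m _)⟩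

end CHAD
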